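/- Let G be a finite simple graph, and suppose there exists a symmetric matrix X indexed by V(G) with X_{u,v} ≥ 1 whenever u and v are equal or non-adjacent, and λ_max(X) = α(G). Suppose further that α(G ⊠ G) > α(G)^2. Then the quantity θ'(G) := inf over such feasible symmetric matrices X of λ_max(X) satisfies θ'(G) < √(α(G ⊠ G)) ≤ Θ(G), i.e., θ'(G) fails to upper bound the Shannon capacity of G. -/

import Mathlib

/-- A set of vertices is independent if no two of its elements are adjacent. -/
def IsIndep {V : Type*} (G : SimpleGraph V) (s : Set V) : Prop :=
  s.Pairwise fun u v => ¬ G.Adj u v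

/-- The independence number: the largest size of an independent set. -/
noncomputable def indepNum {V : Type*} [Fintype V] (G : SimpleGraph V) : ℕ :=
  sSup {n | ∃ s : Finset V, IsIndep G ↑s ∧ s.card = n}
/-- The strong product of two simple graphs. -/
def strongProd {V W : Type*} (G : SimpleGraph V) (H : SimpleGraph W) : SimpleGraph (V × W) where
  Adj a b := a ≠ b ∧ (a.1 = b.1 ∨ G.Adj a.1 b.1) ∧ (a.2 = b.2 ∨ H.Adj a.2 b.2)
  symm := ⟨fun a b h => ⟨fun e => h.1 e.symm, (h.2.1).imp Eq.symm (fun hadj => hadj.symm),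
    (h.2.2).imp Eq.symm (fun hadj => hadj.symm)⟩⟩
  loopless := ⟨fun a h => h.1 rfl⟩
/-- The `k`-fold strong power of a simple graph. -/
def strongPow {V : Type*} (G : SimpleGraph V) (k : ℕ) : SimpleGraph (Fin k → V) where
  Adj x y := x ≠ y ∧ ∀ i, x i = y i ∨ G.Adj (x i) (y i)
  symm := ⟨fun x y h => ⟨fun e => h.1 e.symm, fun i => (h.2 i).imp Eq.symm (fun hadj => hadj.symm)⟩⟩
  loopless := ⟨fun x h => h.1 rfl⟩

/-- The Shannon capacity `Θ(G) = sup_{k ≥ 1} α(G^{⊠ k})^{1/k}`. -/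
noncomputable def shannonCapacity {V : Type*} [Fintype V] [DecidableEq V]
    (G : SimpleGraph V) : ℝ :=
  ⨆ k : ℕ+, (indepNum (strongPow G k) : ℝ) ^ ((k : ℝ)⁻¹)

/-- Schrijver's θ'-function, dual SDP form: the infimum of the largest eigenvalue
over symmetric matrices `X` with `X u v ≥ 1` for all equal or non-adjacent pairs. -/
noncomputable def schrijverTheta {V : Type*} [Fintype V] [DecidableEq V]
    (G : SimpleGraph V) : ℝ :=
  sInf {t | ∃ X : Matrix V V ℝ, ∃ hX : X.IsHermitian,
    (∀ u v, (u = v ∨ ¬ G.Adj u v) → 1 ≤ X u v) ∧ t = ⨆ i, hX.eigenvalues i}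


/-!
The all-ones condition on the diagonal makes the trace of a feasible `X` at least `|V|`, so its
largest eigenvalue is at least `1`; hence the feasible values are bounded below and the
hypothesised `X` gives `θ'(G) ≤ α(G) < √α(G ⊠ G)`. On the other side, `G ⊠ G` is the strong
square `G^{⊠ 2}`, whose term `α(G^{⊠ 2})^{1/2}` appears in the supremum defining `Θ(G)`; that
supremum is bounded by `|V|` since `α(G^{⊠ k}) ≤ |V|^k`.
-/

open Finset

section IndepNum

variable {V W : Type*} {G : SimpleGraph V} {H : SimpleGraph W}

lemma IsIndep.image (f : G ↪g H) {s : Set V} (hs : IsIndep G s) : IsIndep H (f '' s) := by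
  rintro _ ⟨u, hu, rfl⟩ _ ⟨v, hv, rfl⟩ hne hadj
  exact hs hu hv (ne_of_apply_ne f hne) (f.map_adj_iff.mp hadj)

variable [Fintype V] [Fintype W]

lemma indepNum_le_card (G : SimpleGraph V) : indepNum G ≤ Fintype.card V :=
  csSup_le' fun _ ⟨s, _, hs⟩ => hs ▸ s.card_le_univ

lemma card_le_indepNum {s : Finset V} (hs : IsIndep G s) : s.card ≤ indepNum G :=
  le_csSup ⟨_, fun _ ⟨t, _, ht⟩ => ht ▸ t.card_le_univ⟩ ⟨s, hs, rfl⟩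

lemma indepNum_le_of_embedding (f : G ↪g H) : indepNum G ≤ indepNum H :=
  csSup_le' fun _ ⟨s, hs, hcard⟩ => by
    rw [← hcard, ← card_map f.toEmbedding]
    exact card_le_indepNum (by simpa using hs.image f)

lemma indepNum_congr (e : G ≃g H) : indepNum G = indepNum H :=
  le_antisymm (indepNum_le_of_embedding e.toEmbedding)
    (indepNum_le_of_embedding e.symm.toEmbedding)

end IndepNum

section StrongPower

variable {V : Type*}

def strongPowTwoIso (G : SimpleGraph V) : strongPow G 2 ≃g strongProd G G where
  toEquiv := finTwoArrowEquiv V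
  map_rel_iff' {x y} := by
    have hxy : x = y ↔ x 0 = y 0 ∧ x 1 = y 1 := by rw [funext_iff, Fin.forall_fin_two]
    change (strongProd G G).Adj (x 0, x 1) (y 0, y 1) ↔ _
    simp only [strongPow, strongProd, ne_eq, Prod.mk.injEq, Fin.forall_fin_two, hxy]

variable [Fintype V] (G : SimpleGraph V)

lemma indepNum_strongPow_rpow_le_card (k : ℕ+) :
    (indepNum (strongPow G k) : ℝ) ^ ((k : ℝ)⁻¹) ≤ Fintype.card V := by
  have hpow : (indepNum (strongPow G k) : ℝ) ≤ (Fintype.card V : ℝ) ^ (k : ℝ) := by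
    have h := indepNum_le_card (strongPow G k)
    rw [Fintype.card_fun, Fintype.card_fin] at h
    exact_mod_cast h
  calc (indepNum (strongPow G k) : ℝ) ^ ((k : ℝ)⁻¹)
      ≤ ((Fintype.card V : ℝ) ^ (k : ℝ)) ^ ((k : ℝ)⁻¹) := by gcongr
    _ = Fintype.card V := Real.rpow_rpow_inv (by positivity) (by positivity)

lemma sqrt_indepNum_strongProd_le_shannonCapacity [DecidableEq V] :
    √(indepNum (strongProd G G) : ℝ) ≤ shannonCapacity G := by
  have hsqrt : √(indepNum (strongProd G G) : ℝ) =
      (indepNum (strongPow G (2 : ℕ+)) : ℝ) ^ (((2 : ℕ+) : ℝ)⁻¹) := by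
    rw [PNat.val_ofNat, indepNum_congr (strongPowTwoIso G), Real.sqrt_eq_rpow]
    norm_num
  rw [hsqrt]
  exact le_ciSup ⟨_, Set.forall_mem_range.mpr (indepNum_strongPow_rpow_le_card G)⟩ 2

end StrongPower

lemma Matrix.IsHermitian.le_iSup_eigenvalues_of_le_diag {n : Type*} [Fintype n] [DecidableEq n]
    [Nonempty n] {X : Matrix n n ℝ} (hX : X.IsHermitian) {c : ℝ} (hdiag : ∀ i, c ≤ X i i) :
    c ≤ ⨆ i, hX.eigenvalues i := by
  have hcard : (0 : ℝ) < Fintype.card n := by exact_mod_cast Fintype.card_pos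
  have htrace : Fintype.card n * c ≤ ∑ i, hX.eigenvalues i := by
    calc Fintype.card n * c = ∑ _i : n, c := by simp
      _ ≤ X.trace := sum_le_sum fun i _ => hdiag i
      _ = ∑ i, hX.eigenvalues i := by simpa using hX.trace_eq_sum_eigenvalues
  have hmax : ∑ i, hX.eigenvalues i ≤ Fintype.card n * ⨆ i, hX.eigenvalues i := by
    calc ∑ i, hX.eigenvalues i ≤ ∑ _i : n, ⨆ j, hX.eigenvalues j :=
          sum_le_sum fun i _ => le_ciSup (Set.finite_range _).bddAbove i
      _ = Fintype.card n * ⨆ j, hX.eigenvalues j := by simp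
  exact le_of_mul_le_mul_left (htrace.trans hmax) hcard

lemma schrijverTheta_le {V : Type*} [Fintype V] [DecidableEq V] [Nonempty V]
    {G : SimpleGraph V} {X : Matrix V V ℝ} (hX : X.IsHermitian)
    (hfeas : ∀ u v, (u = v ∨ ¬ G.Adj u v) → 1 ≤ X u v) :
    schrijverTheta G ≤ ⨆ i, hX.eigenvalues i := by
  refine csInf_le ⟨1, ?_⟩ ⟨X, hX, hfeas, rfl⟩
  rintro _ ⟨Y, hY, hYfeas, rfl⟩
  exact hY.le_iSup_eigenvalues_of_le_diag fun v => hYfeas v v (Or.inl rfl)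

theorem stmt18 {V : Type*} [Fintype V] [DecidableEq V] (G : SimpleGraph V)
    (hexists : ∃ X : Matrix V V ℝ, ∃ hX : X.IsHermitian,
      (∀ u v, (u = v ∨ ¬ G.Adj u v) → 1 ≤ X u v) ∧
      (⨆ i, hX.eigenvalues i) = (indepNum G : ℝ))
    (hgt : (indepNum G) ^ 2 < indepNum (strongProd G G)) :
    schrijverTheta G < Real.sqrt (indepNum (strongProd G G)) ∧
    Real.sqrt (indepNum (strongProd G G)) ≤ shannonCapacity G := by
  have : Nonempty V :=
    (Fintype.card_pos_iff.mp ((Nat.zero_lt_of_lt hgt).trans_le (indepNum_le_card _))).map Prod.fst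
  obtain ⟨X, hX, hfeas, hmax⟩ := hexists
  have hθ : schrijverTheta G ≤ indepNum G := hmax ▸ schrijverTheta_le hX hfeas
  have hα : (indepNum G : ℝ) < √(indepNum (strongProd G G) : ℝ) :=
    (Real.lt_sqrt (by positivity)).mpr (by exact_mod_cast hgt)
  exact ⟨hθ.trans_lt hα, sqrt_indepNum_strongProd_le_shannonCapacity G⟩
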